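/- Under the hypotheses of the previous statement, if moreover α ≠ 0, then for every y₀ ∈ ℝ the function H(x,y) := x^{−αd}·G(x, x^α·y) extends to a real-analytic function on a neighbourhood of (0,y₀) and is y-regular of order at most d−1 at (0,y₀). -/

import Mathlib

/-!
Write `μ(x) = x^α`, so that `μ(0) = 0`. Since `c_{d-1} ≡ 0`, subtracting from `G` its Taylor
polynomial `Σ_{i<d-1} μ(x)^(d-i) c_i*(x) y^i / i!` leaves a function whose `y`-derivatives of
order `< d` vanish on `y = 0`; dividing it `d` times by `y` gives
`G = Σ_{i<d-1} μ^(d-i) c_i* y^i / i! + y^d W` with `W` analytic and `d! W(0) = ∂_y^d G(0,0) ≠ 0`.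
Then `H(x,y) = Σ_{i<d-1} c_i*(x) y^i / i! + y^d W(x, μ(x) y)` is analytic and
`μ^d H = G(x, μ y)`. Its slice `H(0,·)` is the polynomial `Σ c_i*(0) y^i / i! + W(0) y^d`, whose
`(d-1)`-st derivative `d! W(0) y` vanishes only at `y = 0`, where the `k`-th derivative is
`c_k*(0) ≠ 0`.

Dividing an analytic `f(x,z)` by `z` is done on power series: with `b = (x, 0)` and
`w - b = z (0, 1)`, the difference `p_{k+1}(w,…,w) - p_{k+1}(b,…,b)` telescopes into `k + 1`
terms, each `z` times a multilinear map of norm at most `‖p_{k+1}‖`, so the radius does not shrink.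
-/

open Filter
open scoped Topology ENNReal

/-- The `i`-th partial derivative of `G(x,y)` with respect to `y`. -/
noncomputable def yDeriv {n : ℕ} (G : (Fin n → ℝ) × ℝ → ℝ) (i : ℕ)
    (x : Fin n → ℝ) (y : ℝ) : ℝ :=
  iteratedDeriv i (fun t => G (x, t)) y

/-- `G` is `y`-regular of order `k` at `(x₀, y₀)`. -/
def YRegular {n : ℕ} (G : (Fin n → ℝ) × ℝ → ℝ) (k : ℕ)
    (x₀ : Fin n → ℝ) (y₀ : ℝ) : Prop :=
  yDeriv G k x₀ y₀ ≠ 0 ∧ ∀ j < k, yDeriv G j x₀ y₀ = 0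

lemma Fin.insertNth_ite_lt {α : Type*} {k : ℕ} (i : Fin (k + 1)) (a u v : α) :
    Fin.insertNth i a (fun j : Fin k => if (j : ℕ) < i then u else v) =
      fun l : Fin (k + 1) => if (l : ℕ) < i then u else if l = i then a else v := by
  funext l
  induction l using Fin.succAboveCases i with
  | x => simp
  | p j =>
    rw [Fin.insertNth_apply_succAbove, if_neg (Fin.succAbove_ne i j)]
    simp only [Fin.succAbove, Fin.lt_def]
    split_ifs <;> simp_all <;> omega

section BlowUp

variable {𝕜 E : Type*} [Field 𝕜]

/-- `H(x, y)`, which is `μ(x)^(-d) G(x, μ(x) y)` when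
`G = Σ_{i<N} μ^(d-i) c_i y^i / i! + y^d W`. -/
noncomputable def blowUp (μ : E → 𝕜) (c : ℕ → E → 𝕜) (W : E × 𝕜 → 𝕜) (N d : ℕ)
    (w : E × 𝕜) : 𝕜 :=
  ∑ i ∈ Finset.range N, c i w.1 * w.2 ^ i / i.factorial + w.2 ^ d * W (w.1, μ w.1 * w.2)

variable {μ : E → 𝕜} {c : ℕ → E → 𝕜} {W : E × 𝕜 → 𝕜} {N d : ℕ}

lemma pow_mul_blowUp (hNd : N ≤ d) (w : E × 𝕜) :
    μ w.1 ^ d * blowUp μ c W N d w =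
      ∑ i ∈ Finset.range N, μ w.1 ^ (d - i) * c i w.1 * (μ w.1 * w.2) ^ i / i.factorial +
        (μ w.1 * w.2) ^ d * W (w.1, μ w.1 * w.2) := by
  rw [blowUp, mul_add, Finset.mul_sum]
  congr 1
  · refine Finset.sum_congr rfl fun i hi => ?_
    have hid : i ≤ d := (Finset.mem_range.mp hi).le.trans hNd
    rw [mul_pow, ← pow_sub_mul_pow (μ w.1) hid]
    ring
  · ring

lemma blowUp_slice_zero [Zero E] (hμ0 : μ 0 = 0) :
    (fun t => blowUp μ c W N d (0, t)) =
      fun t => ∑ i ∈ Finset.range N, c i 0 * t ^ i / i.factorial + t ^ d * W 0 := by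
  funext t
  simp [blowUp, hμ0, Prod.mk_zero_zero]

end BlowUp

variable {𝕜 E F : Type*} [NontriviallyNormedField 𝕜] [NormedAddCommGroup E] [NormedSpace 𝕜 E]
  [NormedAddCommGroup F] [NormedSpace 𝕜 F]

namespace ContinuousLinearMap

noncomputable def inlFst : E × 𝕜 →L[𝕜] E × 𝕜 := (inl 𝕜 E 𝕜).comp (fst 𝕜 E 𝕜)

lemma norm_inlFst_le : ‖(inlFst : E × 𝕜 →L[𝕜] E × 𝕜)‖ ≤ 1 :=
  opNorm_le_bound _ zero_le_one fun v => by simp [inlFst, Prod.norm_def]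

end ContinuousLinearMap

namespace FormalMultilinearSeries

variable (p : FormalMultilinearSeries 𝕜 (E × 𝕜) F)

noncomputable def divSndTerm (k : ℕ) (i : Fin (k + 1)) :
    ContinuousMultilinearMap 𝕜 (fun _ : Fin k => E × 𝕜) F :=
  ((p (k + 1)).curryMid i ((0, 1) : E × 𝕜)).compContinuousLinearMap fun j =>
    if (j : ℕ) < i then ContinuousLinearMap.id 𝕜 (E × 𝕜) else ContinuousLinearMap.inlFst

/-- The power series of `(f (x, z) - f (x, 0)) / z` when `p` is that of `f`. -/
noncomputable def divSnd : FormalMultilinearSeries 𝕜 (E × 𝕜) F :=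
  fun k => ∑ i, p.divSndTerm k i

lemma norm_divSndTerm_le (k : ℕ) (i : Fin (k + 1)) : ‖p.divSndTerm k i‖ ≤ ‖p (k + 1)‖ :=
  calc ‖p.divSndTerm k i‖ ≤ ‖(p (k + 1)).curryMid i ((0, 1) : E × 𝕜)‖ * 1 := by
        refine (ContinuousMultilinearMap.norm_compContinuousLinearMap_le _ _).trans ?_
        gcongr
        refine Finset.prod_le_one (fun _ _ => norm_nonneg _) fun j _ => ?_
        split_ifs
        exacts [ContinuousLinearMap.norm_id_le, ContinuousLinearMap.norm_inlFst_le]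
    _ ≤ ‖p (k + 1)‖ := by
        simpa [Prod.norm_def] using ((p (k + 1)).curryMid i).le_opNorm ((0, 1) : E × 𝕜)

lemma norm_divSnd_le (k : ℕ) : ‖p.divSnd k‖ ≤ (k + 1) * ‖p (k + 1)‖ :=
  calc ‖p.divSnd k‖ ≤ ∑ _i : Fin (k + 1), ‖p (k + 1)‖ :=
        (norm_sum_le _ _).trans (Finset.sum_le_sum fun i _ => p.norm_divSndTerm_le k i)
    _ = (k + 1) * ‖p (k + 1)‖ := by simp

lemma smul_divSndTerm_apply_diag (k : ℕ) (i : Fin (k + 1)) (w : E × 𝕜) :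
    w.2 • p.divSndTerm k i (fun _ => w) =
      p (k + 1) (fun l => if (l : ℕ) < i + 1 then w else (w.1, 0)) -
        p (k + 1) (fun l => if (l : ℕ) < i then w else (w.1, 0)) := by
  have hwb : w - (w.1, 0) = w.2 • ((0, 1) : E × 𝕜) := by ext <;> simp
  have harg (j : Fin k) :
      (if (j : ℕ) < i then ContinuousLinearMap.id 𝕜 (E × 𝕜) else ContinuousLinearMap.inlFst) w =
        if (j : ℕ) < i then w else (w.1, 0) := by
    split_ifs <;> rfl
  rw [divSndTerm, ContinuousMultilinearMap.compContinuousLinearMap_apply]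
  simp only [harg]
  rw [← _root_.smul_apply, ← map_smul, ← hwb, map_sub, _root_.sub_apply,
    ContinuousMultilinearMap.curryMid_apply, ContinuousMultilinearMap.curryMid_apply,
    Fin.insertNth_ite_lt, Fin.insertNth_ite_lt]
  congr 2 <;> funext l <;> split_ifs <;> first | rfl | omega

lemma smul_divSnd_apply_diag (k : ℕ) (w : E × 𝕜) :
    w.2 • p.divSnd k (fun _ => w) = p (k + 1) (fun _ => w) - p (k + 1) (fun _ => (w.1, 0)) := by
  let T : ℕ → F := fun m => p (k + 1) fun l => if (l : ℕ) < m then w else (w.1, 0)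
  simp only [divSnd, sum_apply, Finset.smul_sum, smul_divSndTerm_apply_diag]
  change ∑ i : Fin (k + 1), (T (i + 1) - T i) = _
  rw [Fin.sum_univ_eq_sum_range (fun m => T (m + 1) - T m), Finset.sum_range_sub]
  simp [T, Fin.is_le]

theorem radius_le_radius_divSnd : p.radius ≤ p.divSnd.radius := by
  refine ENNReal.le_of_forall_nnreal_lt fun r hr => ?_
  obtain ⟨a, ha, C, -, hpC⟩ := p.norm_mul_pow_le_mul_pow_of_lt_radius hr
  rcases eq_or_ne r 0 with rfl | hr0
  · simp
  have hr0' : (0 : ℝ) < r := by positivity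
  have hlim : Tendsto (fun k : ℕ => C / r * ((k + 1 : ℕ) * a ^ (k + 1))) atTop (𝓝 0) := by
    simpa using ((tendsto_self_mul_const_pow_of_lt_one ha.1.le ha.2).comp
      (tendsto_add_atTop_nat 1)).const_mul (C / r)
  refine p.divSnd.le_radius_of_isBigO (.trans (.of_norm_le fun k => ?_) (hlim.isBigO_one ℝ))
  rw [Real.norm_of_nonneg (by positivity)]
  calc ‖p.divSnd k‖ * r ^ k ≤ (k + 1) * ‖p (k + 1)‖ * r ^ k := by
        gcongr; exact p.norm_divSnd_le k
    _ = (k + 1) * (‖p (k + 1)‖ * r ^ (k + 1)) / r := by field_simp; ring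
    _ ≤ (k + 1) * (C * a ^ (k + 1)) / r := by gcongr (k + 1 : ℝ) * ?_ / (r : ℝ); exact hpC _
    _ = C / r * ((k + 1 : ℕ) * a ^ (k + 1)) := by push_cast; ring

end FormalMultilinearSeries

theorem HasFPowerSeriesOnBall.sub_eq_snd_smul_divSnd_sum [CompleteSpace F]
    {f : E × 𝕜 → F} {p : FormalMultilinearSeries 𝕜 (E × 𝕜) F} {r : ℝ≥0∞}
    (hf : HasFPowerSeriesOnBall f p 0 r) {w : E × 𝕜} (hw : w ∈ Metric.eball 0 r) :
    f w - f (w.1, 0) = w.2 • p.divSnd.sum w := by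
  have hw₀ : ((w.1, 0) : E × 𝕜) ∈ Metric.eball 0 r := by
    rw [mem_eball_zero_iff] at hw ⊢
    refine lt_of_le_of_lt (enorm_le_iff_norm_le.mpr ?_) hw
    simp [Prod.norm_def]
  have hdiff : HasSum (fun m => p m (fun _ => w) - p m (fun _ => (w.1, 0))) (f w - f (w.1, 0)) := by
    simpa using (hf.hasSum hw).sub (hf.hasSum hw₀)
  have hq : HasSum (fun k => w.2 • p.divSnd k (fun _ => w)) (w.2 • p.divSnd.sum w) :=
    (p.divSnd.hasSum (Metric.eball_subset_eball
      (hf.r_le.trans p.radius_le_radius_divSnd) hw)).const_smul _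
  simp only [FormalMultilinearSeries.smul_divSnd_apply_diag] at hq
  have hconst : p 0 (fun _ => w) = p 0 (fun _ => (w.1, 0)) := congrArg _ (Subsingleton.elim _ _)
  have hshift := (hasSum_nat_add_iff' 1).mpr hdiff
  rw [Finset.sum_range_one, hconst, sub_self, sub_zero] at hshift
  exact hshift.unique hq

section Analytic

variable [CompleteSpace F]

theorem AnalyticAt.exists_sub_eq_snd_smul {f : E × 𝕜 → F} (hf : AnalyticAt 𝕜 f 0) :
    ∃ g : E × 𝕜 → F, AnalyticAt 𝕜 g 0 ∧ ∀ᶠ w in 𝓝 0, f w - f (w.1, 0) = w.2 • g w := by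
  obtain ⟨p, r, hp⟩ := hf
  have hrad : 0 < p.divSnd.radius :=
    (hp.r_pos.trans_le hp.r_le).trans_le p.radius_le_radius_divSnd
  refine ⟨p.divSnd.sum, (p.divSnd.hasFPowerSeriesOnBall hrad).analyticAt, ?_⟩
  filter_upwards [Metric.eball_mem_nhds 0 hp.r_pos] with w hw using
    hp.sub_eq_snd_smul_divSnd_sum hw

lemma AnalyticAt.eventually_analyticAt_slice {f : E × 𝕜 → F} (hf : AnalyticAt 𝕜 f 0) :
    ∀ᶠ x in 𝓝 0, AnalyticAt 𝕜 (fun t => f (x, t)) 0 :=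
  ((Continuous.prodMk_left 0).tendsto' 0 0 rfl).eventually
    (p := fun w : E × 𝕜 => AnalyticAt 𝕜 (fun t => f (w.1, t)) w.2) <|
    hf.eventually_analyticAt.mono fun _ hw => hw.comp (analyticAt_const.prod analyticAt_id)

end Analytic

lemma iteratedDeriv_pow_mul_apply_zero {h : 𝕜 → 𝕜} {j : ℕ} (hh : ContDiffAt 𝕜 j h 0) :
    iteratedDeriv j (fun t => t ^ j * h t) 0 = j.factorial * h 0 := by
  rw [iteratedDeriv_fun_mul (f := fun t => t ^ j) (by fun_prop) hh]
  simp only [iteratedDeriv_fun_pow_zero]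
  simp

section Polynomial

variable [CharZero 𝕜]

lemma iteratedDeriv_sum_mul_pow_div_factorial_zero (b : ℕ → 𝕜) (N m : ℕ) :
    iteratedDeriv m (fun t => ∑ i ∈ Finset.range N, b i * t ^ i / i.factorial) 0 =
      if m < N then b m else 0 := by
  simp (disch := fun_prop) only [iteratedDeriv_fun_sum, iteratedDeriv_div_const,
    iteratedDeriv_const_mul_field, iteratedDeriv_fun_pow_zero]
  simp only [Nat.cast_ite, Nat.cast_zero, mul_ite, mul_zero, ite_div, zero_div]
  simp [Nat.factorial_ne_zero]

lemma exists_iteratedDeriv_sum_add_pow_mul_ne_zero (b : ℕ → 𝕜) {w : 𝕜} (hw : w ≠ 0) {d k : ℕ}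
    (hk : k < d - 1) (hb : b k ≠ 0) (y : 𝕜) :
    ∃ m ≤ d - 1, iteratedDeriv m
      (fun t => ∑ i ∈ Finset.range (d - 1), b i * t ^ i / i.factorial + t ^ d * w) y ≠ 0 := by
  have hderiv (m : ℕ) (y : 𝕜) : iteratedDeriv m
      (fun t => ∑ i ∈ Finset.range (d - 1), b i * t ^ i / i.factorial + t ^ d * w) y =
      iteratedDeriv m (fun t => ∑ i ∈ Finset.range (d - 1), b i * t ^ i / i.factorial) y +
        d.descFactorial m * y ^ (d - m) * w := by
    rw [iteratedDeriv_fun_add (by fun_prop) (by fun_prop), iteratedDeriv_mul_const_field,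
      iteratedDeriv_pow]
  rcases eq_or_ne y 0 with rfl | hy
  · refine ⟨k, hk.le, ?_⟩
    rwa [hderiv, iteratedDeriv_sum_mul_pow_div_factorial_zero, if_pos hk,
      zero_pow (by omega), mul_zero, zero_mul, add_zero]
  · refine ⟨d - 1, le_rfl, ?_⟩
    have hlow : iteratedDeriv (d - 1)
        (fun t => ∑ i ∈ Finset.range (d - 1), b i * t ^ i / i.factorial) y = 0 := by
      simp (disch := fun_prop) only [iteratedDeriv_fun_sum, iteratedDeriv_div_const,
        iteratedDeriv_const_mul_field, iteratedDeriv_pow]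
      refine Finset.sum_eq_zero fun i hi => ?_
      rw [Nat.descFactorial_eq_zero_iff_lt.mpr (Finset.mem_range.mp hi)]
      simp
    have hdesc : d.descFactorial (d - 1) ≠ 0 := by
      rw [Ne, Nat.descFactorial_eq_zero_iff_lt]
      omega
    rw [hderiv, hlow, zero_add]
    exact mul_ne_zero (mul_ne_zero (Nat.cast_ne_zero.mpr hdesc) (pow_ne_zero _ hy)) hw

end Polynomial

section Division

variable [CharZero 𝕜] [CompleteSpace 𝕜]

theorem AnalyticAt.exists_eventually_eq_snd_pow_mul {f : E × 𝕜 → 𝕜} (hf : AnalyticAt 𝕜 f 0)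
    (j : ℕ) (hvan : ∀ m < j, ∀ᶠ x in 𝓝 0, iteratedDeriv m (fun t => f (x, t)) 0 = 0) :
    ∃ g : E × 𝕜 → 𝕜, AnalyticAt 𝕜 g 0 ∧ ∀ᶠ w in 𝓝 0, f w = w.2 ^ j * g w := by
  induction j with
  | zero => exact ⟨f, hf, by simp⟩
  | succ j ih =>
    obtain ⟨g, hg, hfg⟩ := ih fun m hm => hvan m (by omega)
    have hslice : ∀ᶠ x in 𝓝 0, (fun t => f (x, t)) =ᶠ[𝓝 0] (fun t => t ^ j * g (x, t)) := by
      rw [← Prod.mk_zero_zero, nhds_prod_eq] at hfg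
      exact hfg.curry
    have hg0 : ∀ᶠ x in 𝓝 0, g (x, 0) = 0 := by
      filter_upwards [hslice, hg.eventually_analyticAt_slice, hvan j j.lt_succ_self]
        with x hfx hgx hder
      rw [hfx.iteratedDeriv_eq, iteratedDeriv_pow_mul_apply_zero hgx.contDiffAt] at hder
      simpa [Nat.factorial_ne_zero] using hder
    obtain ⟨g', hg', hgg'⟩ := hg.exists_sub_eq_snd_smul
    refine ⟨g', hg', ?_⟩
    filter_upwards [hfg, hgg', continuous_fst.tendsto' (0 : E × 𝕜) 0 rfl |>.eventually hg0]
      with w hfw hgw hgw₀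
    rw [hfw, ← sub_zero (g w), ← hgw₀, hgw, smul_eq_mul, pow_succ, mul_assoc]

theorem AnalyticAt.exists_eventually_eq_sum_add_snd_pow_mul {f : E × 𝕜 → 𝕜}
    (hf : AnalyticAt 𝕜 f 0) {N d : ℕ} {c : ℕ → E → 𝕜} (hc : ∀ i < N, AnalyticAt 𝕜 (c i) 0)
    (hderiv : ∀ i < N, ∀ᶠ x in 𝓝 0, iteratedDeriv i (fun t => f (x, t)) 0 = c i x)
    (hvan : ∀ m, N ≤ m → m < d → ∀ᶠ x in 𝓝 0, iteratedDeriv m (fun t => f (x, t)) 0 = 0) :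
    ∃ W : E × 𝕜 → 𝕜, AnalyticAt 𝕜 W 0 ∧
      ∀ᶠ w in 𝓝 0, f w = ∑ i ∈ Finset.range N, c i w.1 * w.2 ^ i / i.factorial + w.2 ^ d * W w := by
  set T : E × 𝕜 → 𝕜 := fun w => ∑ i ∈ Finset.range N, c i w.1 * w.2 ^ i / i.factorial
  have hT : AnalyticAt 𝕜 T 0 :=
    Finset.analyticAt_fun_sum _ fun i hi =>
      (((hc i (Finset.mem_range.mp hi)).comp_of_eq analyticAt_fst rfl).mul
        (analyticAt_snd.pow i)).div_const
  have hvanT : ∀ m < d, ∀ᶠ x in 𝓝 0, iteratedDeriv m (fun t => f (x, t) - T (x, t)) 0 = 0 := by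
    intro m hm
    have hTslice (x : E) : iteratedDeriv m (fun t => T (x, t)) 0 = if m < N then c m x else 0 :=
      iteratedDeriv_sum_mul_pow_div_factorial_zero (fun i => c i x) N m
    have hsub : ∀ᶠ x in 𝓝 0, iteratedDeriv m (fun t => f (x, t) - T (x, t)) 0 =
        iteratedDeriv m (fun t => f (x, t)) 0 - iteratedDeriv m (fun t => T (x, t)) 0 := by
      filter_upwards [hf.eventually_analyticAt_slice] with x hx
      exact iteratedDeriv_fun_sub hx.contDiffAt
        (show ContDiffAt 𝕜 m (fun t => ∑ i ∈ Finset.range N, c i x * t ^ i / i.factorial) 0 by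
          fun_prop)
    by_cases hmN : m < N
    · filter_upwards [hsub, hderiv m hmN] with x hx hcx
      rw [hx, hTslice, if_pos hmN, hcx, sub_self]
    · filter_upwards [hsub, hvan m (not_lt.mp hmN) hm] with x hx hfx
      rw [hx, hTslice, if_neg hmN, hfx, sub_zero]
  obtain ⟨W, hW, hfW⟩ := (hf.sub hT).exists_eventually_eq_snd_pow_mul d hvanT
  exact ⟨W, hW, hfW.mono fun w hw => eq_add_of_sub_eq' hw⟩

end Division

section BlowUp

variable {μ : E → 𝕜} {c : ℕ → E → 𝕜} {W : E × 𝕜 → 𝕜} {N d : ℕ}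

lemma analyticAt_blowUp {w : E × 𝕜} (hc : ∀ i < N, AnalyticAt 𝕜 (c i) w.1)
    (hμ : AnalyticAt 𝕜 μ w.1) (hW : AnalyticAt 𝕜 W (w.1, μ w.1 * w.2)) :
    AnalyticAt 𝕜 (blowUp μ c W N d) w := by
  have hψ : AnalyticAt 𝕜 (fun w : E × 𝕜 => (w.1, μ w.1 * w.2)) w :=
    analyticAt_fst.prod ((hμ.comp_of_eq analyticAt_fst rfl).mul analyticAt_snd)
  have hWψ : AnalyticAt 𝕜 (fun w : E × 𝕜 => W (w.1, μ w.1 * w.2)) w := hW.comp_of_eq hψ rfl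
  refine (Finset.analyticAt_fun_sum _ fun i hi => ?_).add ((analyticAt_snd.pow d).mul hWψ)
  exact (((hc i (Finset.mem_range.mp hi)).comp_of_eq analyticAt_fst rfl).mul
    (analyticAt_snd.pow i)).div_const

lemma eventually_analyticAt_blowUp_and_pow_mul_eq [CompleteSpace 𝕜] {G : E × 𝕜 → 𝕜}
    (hμ : ∀ x, AnalyticAt 𝕜 μ x) (hμ0 : μ 0 = 0) (hNd : N ≤ d) (hc : ∀ i < N, ∀ᶠ x in 𝓝 0, AnalyticAt 𝕜 (c i) x)
    (hW : AnalyticAt 𝕜 W 0)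
    (hGW : ∀ᶠ w in 𝓝 0, G w =
      ∑ i ∈ Finset.range N, μ w.1 ^ (d - i) * c i w.1 * w.2 ^ i / i.factorial + w.2 ^ d * W w)
    (y₀ : 𝕜) :
    ∀ᶠ w in 𝓝 (0, y₀), AnalyticAt 𝕜 (blowUp μ c W N d) w ∧
      μ w.1 ^ d * blowUp μ c W N d w = G (w.1, μ w.1 * w.2) := by
  have hψ : Tendsto (fun w : E × 𝕜 => (w.1, μ w.1 * w.2)) (𝓝 (0, y₀)) (𝓝 0) := by
    have hμc : Continuous μ := continuous_iff_continuousAt.mpr fun x => (hμ x).continuousAt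
    exact Continuous.tendsto' (by fun_prop) _ _ (by simp [hμ0])
  have hc' : ∀ᶠ x in 𝓝 0, ∀ i < N, AnalyticAt 𝕜 (c i) x :=
    (Set.finite_lt_nat N).eventually_all.mpr hc
  filter_upwards [(continuous_fst.tendsto' _ 0 rfl).eventually hc',
    hψ.eventually (hW.eventually_analyticAt.and hGW)] with w hcw ⟨hWw, hGw⟩
  exact ⟨analyticAt_blowUp hcw (hμ w.1) hWw, by rw [hGw, pow_mul_blowUp hNd]⟩

lemma iteratedDeriv_slice_zero_eq_factorial_mul [CompleteSpace 𝕜] {G : E × 𝕜 → 𝕜}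
    (hμ0 : μ 0 = 0) (hNd : N ≤ d) (hW : AnalyticAt 𝕜 W 0)
    (hGW : ∀ᶠ w in 𝓝 0, G w =
      ∑ i ∈ Finset.range N, μ w.1 ^ (d - i) * c i w.1 * w.2 ^ i / i.factorial + w.2 ^ d * W w) :
    iteratedDeriv d (fun t => G (0, t)) 0 = d.factorial * W 0 := by
  have hGslice : (fun t => G (0, t)) =ᶠ[𝓝 0] fun t => t ^ d * W (0, t) := by
    filter_upwards [((Continuous.prodMk_right (0 : E)).tendsto' 0 0 rfl).eventually hGW]
      with t ht
    rw [ht, Finset.sum_eq_zero fun i hi => ?_, zero_add]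
    have hid : d - i ≠ 0 := by have := Finset.mem_range.mp hi; omega
    simp [hμ0, zero_pow hid]
  rw [hGslice.iteratedDeriv_eq,
    iteratedDeriv_pow_mul_apply_zero hW.eventually_analyticAt_slice.self_of_nhds.contDiffAt,
    Prod.mk_zero_zero]

end BlowUp

lemma exists_yRegular_le {n N : ℕ} {H : (Fin n → ℝ) × ℝ → ℝ} {x₀ : Fin n → ℝ} {y₀ : ℝ}
    (h : ∃ m ≤ N, yDeriv H m x₀ y₀ ≠ 0) : ∃ k ≤ N, YRegular H k x₀ y₀ := by
  classical
  have h' : ∃ m, m ≤ N ∧ yDeriv H m x₀ y₀ ≠ 0 := h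
  refine ⟨Nat.find h', (Nat.find_spec h').1, (Nat.find_spec h').2, fun j hj => ?_⟩
  by_contra hne
  exact Nat.find_min h' hj ⟨hj.le.trans (Nat.find_spec h').1, hne⟩

theorem lemma_machine_away_from_zero_general
    (n : ℕ) (U : Set ((Fin n → ℝ) × ℝ)) (hU : U ∈ nhds ((0, 0) : (Fin n → ℝ) × ℝ))
    (G : (Fin n → ℝ) × ℝ → ℝ) (hG : AnalyticOnNhd ℝ G U)
    (d : ℕ) (hreg : YRegular G d 0 0)
    (α : Fin n → ℕ) (hα : α ≠ 0)
    (hcd1 : ∀ᶠ x in nhds (0 : Fin n → ℝ), yDeriv G (d - 1) x 0 = 0)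
    (cstar : ℕ → (Fin n → ℝ) → ℝ)
    (hcstar : ∀ i < d - 1, ∀ᶠ x in nhds (0 : Fin n → ℝ),
      AnalyticAt ℝ (cstar i) x ∧
        yDeriv G i x 0 = (∏ j, x j ^ ((d - i) * α j)) * cstar i x)
    (k : ℕ) (hk : k < d - 1) (hk0 : cstar k 0 ≠ 0) :
    ∀ y₀ : ℝ, ∃ V ∈ nhds ((0, y₀) : (Fin n → ℝ) × ℝ), ∃ H : (Fin n → ℝ) × ℝ → ℝ,
      AnalyticOnNhd ℝ H V ∧
      (∀ p ∈ V, (∏ j, p.1 j ^ (d * α j)) * H p = G (p.1, (∏ j, p.1 j ^ α j) * p.2)) ∧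
      ∃ k' ≤ d - 1, YRegular H k' 0 y₀ := by
  intro y₀
  simp only [pow_mul', Finset.prod_pow] at hcstar ⊢
  set μ : (Fin n → ℝ) → ℝ := fun x => ∏ j, x j ^ α j
  have hμ0 : μ 0 = 0 := by
    obtain ⟨j₀, hj₀⟩ := Function.ne_iff.mp hα
    exact Finset.prod_eq_zero (Finset.mem_univ j₀) (by simpa using hj₀)
  have hμ (x : Fin n → ℝ) : AnalyticAt ℝ μ x :=
    Finset.analyticAt_fun_prod _ fun j _ =>
      ((ContinuousLinearMap.proj (R := ℝ) (φ := fun _ : Fin n => ℝ) j).analyticAt x).fun_pow _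
  obtain ⟨W, hW, hGW⟩ := (hG 0 (mem_of_mem_nhds hU)).exists_eventually_eq_sum_add_snd_pow_mul
    (N := d - 1) (d := d) (c := fun i x => μ x ^ (d - i) * cstar i x)
    (fun i hi => ((hμ 0).pow _).mul (hcstar i hi).self_of_nhds.1)
    (fun i hi => (hcstar i hi).mono fun x hx => hx.2)
    (fun m hm₁ hm₂ => by obtain rfl : m = d - 1 := (by omega); exact hcd1)
  have hW0 : W 0 ≠ 0 := fun h => hreg.1 <| by
    rw [yDeriv, iteratedDeriv_slice_zero_eq_factorial_mul hμ0 (d.sub_le 1) hW hGW, h, mul_zero]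
  refine ⟨_, eventually_analyticAt_blowUp_and_pow_mul_eq hμ hμ0 (d.sub_le 1)
    (fun i hi => (hcstar i hi).mono fun _ hx => hx.1) hW hGW y₀, blowUp μ cstar W (d - 1) d,
    fun w hw => hw.1, fun w hw => hw.2, exists_yRegular_le ?_⟩
  simpa only [yDeriv, blowUp_slice_zero hμ0] using
    exists_iteratedDeriv_sum_add_pow_mul_ne_zero (fun i => cstar i 0) hW0 hk hk0 y₀

/-- Lemma 4.4 (second part, analytic case): under the same hypotheses, if moreover
`α ≠ 0`, then for every `y₀ ∈ ℝ` the function `H(x,y) = x^{-αd}·G(x, x^α y)` extends to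
an analytic function near `(0, y₀)` which is `y`-regular of order at most `d-1` there. -/
theorem lemma_machine_away_from_zero
    (n : ℕ) (U : Set ((Fin n → ℝ) × ℝ)) (hU : U ∈ nhds ((0, 0) : (Fin n → ℝ) × ℝ))
    (G : (Fin n → ℝ) × ℝ → ℝ) (hG : AnalyticOnNhd ℝ G U)
    (d : ℕ) (hd : 1 < d) (hreg : YRegular G d 0 0)
    (α : Fin n → ℕ) (hα : α ≠ 0)
    (hcd1 : ∀ᶠ x in nhds (0 : Fin n → ℝ), yDeriv G (d - 1) x 0 = 0)
    (cstar : ℕ → (Fin n → ℝ) → ℝ)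
    (hcstar : ∀ i < d - 1, ∀ᶠ x in nhds (0 : Fin n → ℝ),
      AnalyticAt ℝ (cstar i) x ∧
        yDeriv G i x 0 = (∏ j, x j ^ ((d - i) * α j)) * cstar i x)
    (k : ℕ) (hk : k < d - 1) (hk0 : cstar k 0 ≠ 0) :
    ∀ y₀ : ℝ, ∃ V ∈ nhds ((0, y₀) : (Fin n → ℝ) × ℝ), ∃ H : (Fin n → ℝ) × ℝ → ℝ,
      AnalyticOnNhd ℝ H V ∧
      (∀ p ∈ V, (∏ j, p.1 j ^ (d * α j)) * H p = G (p.1, (∏ j, p.1 j ^ α j) * p.2)) ∧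
      ∃ k' ≤ d - 1, YRegular H k' 0 y₀ :=
  lemma_machine_away_from_zero_general n U hU G hG d hreg α hα hcd1 cstar hcstar k hk hk0
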